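/- Fix s ∈ (−1/2, 0) and let 𝓕 be a bounded subset of H^s(𝕋). Then 𝓕 is equicontinuous in H^s(𝕋) if and only if sup_{f∈𝓕} ‖f‖_{H^s_κ} → 0 as κ → ∞, where ‖f‖²_{H^s_κ} = Σ_{n∈ℤ} |f̂(n)|² (|n|+κ)^{2s}. -/

import Mathlib

/-!
In Fourier variables, `‖f (· + y) - f‖²_{H^s} = ∑ₙ (2 - 2 cos (n y)) |f̂ n|² (|n| + 1)^{2s}`.

If the `H^s_κ` norms are uniformly small at `κ = K`, the frequencies `|n| ≤ K` contribute at
most `K² y² B` (as `2 - 2 cos x ≤ x²`), and the frequencies `|n| > K` at most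
`4 · 2^{-2s} ‖f‖²_{H^s_K}` (as `(|n| + 1)^{2s} ≤ 2^{-2s} (|n| + K)^{2s}` there).

Conversely, averaging the modulus of continuity over `y ∈ [-a, a]` bounds the part of
`‖f‖²_{H^s}` carried by the frequencies `|n| ≥ 2 / a`, and on the remaining frequencies
`(|n| + κ)^{2s} ≤ κ^{2s} (2 / a + 1)^{-2s} (|n| + 1)^{2s}`, which tends to `0` as `κ → ∞`.
-/

open Real Complex Filter Topology

noncomputable def sobolevWeight (s κ : ℝ) (n : ℤ) : ℝ := (|(n : ℝ)| + κ) ^ (2 * s)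

/-- `‖f‖²_{H^s_κ}`, for `f` given by its Fourier coefficients. -/
noncomputable def sobolevNormSq (s κ : ℝ) (f : ℤ → ℂ) : ℝ :=
  ∑' n : ℤ, ‖f n‖ ^ 2 * sobolevWeight s κ n

/-- The Fourier coefficients of `f (· + y) - f`. -/
noncomputable def translationDiff (y : ℝ) (f : ℤ → ℂ) : ℤ → ℂ :=
  fun n => (Complex.exp (Complex.I * n * y) - 1) * f n

section Weight

variable {s κ : ℝ}

lemma sobolevWeight_nonneg (hκ : 0 ≤ κ) (n : ℤ) : 0 ≤ sobolevWeight s κ n :=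
  rpow_nonneg (by positivity) _

lemma sobolevWeight_le_of_le (hs : s ≤ 0) (hκ : 0 < κ) {κ' : ℝ} (hκκ' : κ ≤ κ') (n : ℤ) :
    sobolevWeight s κ' n ≤ sobolevWeight s κ n :=
  rpow_le_rpow_of_nonpos (by positivity) (by linarith) (by linarith)

lemma sobolevWeight_le_of_abs_le (hs : s ≤ 0) (hκ : 0 < κ) {N : ℝ} {n : ℤ} (hn : |(n : ℝ)| ≤ N) :
    sobolevWeight s κ n ≤ κ ^ (2 * s) * (N + 1) ^ (-(2 * s)) * sobolevWeight s 1 n := by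
  have hn1 : 0 < |(n : ℝ)| + 1 := by positivity
  calc sobolevWeight s κ n ≤ κ ^ (2 * s) :=
        rpow_le_rpow_of_nonpos hκ (le_add_of_nonneg_left (abs_nonneg _)) (by linarith)
    _ = κ ^ (2 * s) * ((|(n : ℝ)| + 1) ^ (-(2 * s)) * sobolevWeight s 1 n) := by
        rw [sobolevWeight, ← rpow_add hn1, neg_add_cancel, rpow_zero, mul_one]
    _ ≤ κ ^ (2 * s) * ((N + 1) ^ (-(2 * s)) * sobolevWeight s 1 n) := by
        gcongr
        · exact sobolevWeight_nonneg zero_le_one n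
        · linarith
    _ = κ ^ (2 * s) * (N + 1) ^ (-(2 * s)) * sobolevWeight s 1 n := by ring

lemma sobolevWeight_one_le (hs : s ≤ 0) (hκ : 0 < κ) {n : ℤ} (hn : κ ≤ |(n : ℝ)|) :
    sobolevWeight s 1 n ≤ 2 ^ (-(2 * s)) * sobolevWeight s κ n := by
  have hn1 : 0 < |(n : ℝ)| + 1 := by positivity
  calc sobolevWeight s 1 n = 2 ^ (-(2 * s)) * (2 * (|(n : ℝ)| + 1)) ^ (2 * s) := by
        rw [mul_rpow zero_le_two hn1.le, ← mul_assoc, ← rpow_add zero_lt_two, neg_add_cancel,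
          rpow_zero, one_mul, sobolevWeight]
    _ ≤ 2 ^ (-(2 * s)) * sobolevWeight s κ n := by
        gcongr
        exact rpow_le_rpow_of_nonpos (by positivity) (by linarith) (by linarith)

lemma summable_sobolevWeight_of_le (hs : s ≤ 0) (hκ : 0 < κ) {κ' : ℝ} (hκκ' : κ ≤ κ')
    {f : ℤ → ℂ} (hf : Summable fun n => ‖f n‖ ^ 2 * sobolevWeight s κ n) :
    Summable fun n => ‖f n‖ ^ 2 * sobolevWeight s κ' n :=
  hf.of_nonneg_of_le (fun n => mul_nonneg (sq_nonneg _) (sobolevWeight_nonneg (by linarith) n))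
    fun n => mul_le_mul_of_nonneg_left (sobolevWeight_le_of_le hs hκ hκκ' n) (sq_nonneg _)

end Weight

lemma two_sub_two_cos_le_four (x : ℝ) : 2 - 2 * Real.cos x ≤ 4 := by
  linarith [Real.neg_one_le_cos x]

lemma two_sub_two_cos_le_sq (x : ℝ) : 2 - 2 * Real.cos x ≤ x ^ 2 := by
  linarith [Real.one_sub_sq_div_two_le_cos (x := x)]

lemma two_mul_le_integral_two_sub_two_cos {a ω : ℝ} (hω : 2 ≤ a * |ω|) :
    2 * a ≤ ∫ y in -a..a, (2 - 2 * Real.cos (ω * y)) := by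
  have hω0 : ω ≠ 0 := by rintro rfl; norm_num at hω
  have hsin : ω⁻¹ * (Real.sin (ω * a) - Real.sin (ω * -a)) ≤ a := by
    rw [mul_neg, Real.sin_neg, sub_neg_eq_add, ← two_mul]
    calc ω⁻¹ * (2 * Real.sin (ω * a)) ≤ |ω|⁻¹ * 2 := by
          refine (le_abs_self _).trans ?_
          rw [abs_mul, abs_inv, abs_mul, abs_two]
          gcongr
          exact mul_le_of_le_one_right zero_le_two (Real.abs_sin_le_one _)
      _ ≤ a := by
          rw [inv_mul_le_iff₀ (abs_pos.2 hω0)]; linarith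
  have hcos : Continuous fun y => 2 * Real.cos (ω * y) := by fun_prop
  rw [intervalIntegral.integral_sub intervalIntegrable_const (hcos.intervalIntegrable _ _),
    intervalIntegral.integral_const_mul, intervalIntegral.integral_comp_mul_left Real.cos hω0,
    integral_cos, intervalIntegral.integral_const, smul_eq_mul, smul_eq_mul]
  linarith

/-- The mean of `2 - 2 cos (n y)` over `y ∈ [-a, a]` is at least `1` once `|n| ≥ 2 / a`. -/
lemma sum_le_of_forall_sum_two_sub_two_cos_mul_le {t : ℤ → ℝ} {A : Finset ℤ} {a C : ℝ}
    (ht : ∀ n, 0 ≤ t n) (ha : 0 < a) (hA : ∀ n ∈ A, 2 ≤ a * |(n : ℝ)|)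
    (hC : ∀ y ∈ Set.Icc (-a) a, ∑ n ∈ A, (2 - 2 * Real.cos (n * y)) * t n ≤ C) :
    ∑ n ∈ A, t n ≤ C := by
  have hcont : ∀ n : ℤ, Continuous fun y : ℝ => (2 - 2 * Real.cos (n * y)) * t n := by
    intro n; fun_prop
  have h : 2 * a * ∑ n ∈ A, t n ≤ 2 * a * C :=
    calc 2 * a * ∑ n ∈ A, t n ≤ ∑ n ∈ A, (∫ y in -a..a, (2 - 2 * Real.cos (n * y))) * t n := by
          rw [Finset.mul_sum]
          exact Finset.sum_le_sum fun n hn =>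
            mul_le_mul_of_nonneg_right (two_mul_le_integral_two_sub_two_cos (hA n hn)) (ht n)
      _ = ∫ y in -a..a, ∑ n ∈ A, (2 - 2 * Real.cos (n * y)) * t n := by
          rw [intervalIntegral.integral_finsetSum fun n _ => (hcont n).intervalIntegrable _ _]
          simp only [intervalIntegral.integral_mul_const]
      _ ≤ ∫ _ in -a..a, C :=
          intervalIntegral.integral_mono_on (by linarith)
            ((continuous_finsetSum A fun n _ => hcont n).intervalIntegrable _ _)
            intervalIntegrable_const hC
      _ = 2 * a * C := by rw [intervalIntegral.integral_const, smul_eq_mul]; ring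
  exact le_of_mul_le_mul_left h (by positivity)

lemma norm_translationDiff_sq (y : ℝ) (f : ℤ → ℂ) (n : ℤ) :
    ‖translationDiff y f n‖ ^ 2 = (2 - 2 * Real.cos (n * y)) * ‖f n‖ ^ 2 := by
  have h : Complex.I * n * y = ((n * y : ℝ) : ℂ) * Complex.I := by push_cast; ring
  rw [translationDiff, norm_mul, mul_pow, h, Complex.sq_norm, Complex.normSq_apply,
    Complex.sub_re, Complex.sub_im, Complex.exp_ofReal_mul_I_re, Complex.exp_ofReal_mul_I_im,
    Complex.one_re, Complex.one_im]
  nlinarith [Real.sin_sq_add_cos_sq (n * y)]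

section Translation

variable {s : ℝ} {f : ℤ → ℂ}

lemma summable_translationDiff (hf : Summable fun n => ‖f n‖ ^ 2 * sobolevWeight s 1 n)
    (y : ℝ) : Summable fun n => ‖translationDiff y f n‖ ^ 2 * sobolevWeight s 1 n := by
  refine (hf.mul_left 4).of_nonneg_of_le (fun n => ?_) fun n => ?_
  · exact mul_nonneg (sq_nonneg _) (sobolevWeight_nonneg zero_le_one n)
  · rw [norm_translationDiff_sq, mul_assoc]
    exact mul_le_mul_of_nonneg_right (two_sub_two_cos_le_four _)
      (mul_nonneg (sq_nonneg _) (sobolevWeight_nonneg zero_le_one n))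

theorem sobolevNormSq_le_of_translationDiff_le (hs : s ≤ 0) {κ a C : ℝ} (hκ : 1 ≤ κ) (ha : 0 < a)
    (hf : Summable fun n => ‖f n‖ ^ 2 * sobolevWeight s 1 n)
    (hC : ∀ y ∈ Set.Icc (-a) a, sobolevNormSq s 1 (translationDiff y f) ≤ C) :
    sobolevNormSq s κ f ≤ κ ^ (2 * s) * (2 / a + 1) ^ (-(2 * s)) * sobolevNormSq s 1 f + C := by
  have ht : ∀ n, 0 ≤ ‖f n‖ ^ 2 * sobolevWeight s 1 n := fun n =>
    mul_nonneg (sq_nonneg _) (sobolevWeight_nonneg zero_le_one n)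
  refine Real.tsum_le_of_sum_le
    (fun n => mul_nonneg (sq_nonneg _) (sobolevWeight_nonneg (by linarith) n)) fun A => ?_
  rw [← A.sum_filter_add_sum_filter_not fun n : ℤ => |(n : ℝ)| ≤ 2 / a]
  refine add_le_add ?_ ?_
  · calc ∑ n ∈ A with |((n : ℤ) : ℝ)| ≤ 2 / a, ‖f n‖ ^ 2 * sobolevWeight s κ n
        ≤ ∑ n ∈ A with |((n : ℤ) : ℝ)| ≤ 2 / a,
            κ ^ (2 * s) * (2 / a + 1) ^ (-(2 * s)) * (‖f n‖ ^ 2 * sobolevWeight s 1 n) := by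
          refine Finset.sum_le_sum fun n hn => ?_
          rw [mul_left_comm]
          exact mul_le_mul_of_nonneg_left
            (sobolevWeight_le_of_abs_le hs (by linarith) (Finset.mem_filter.1 hn).2) (sq_nonneg _)
      _ ≤ κ ^ (2 * s) * (2 / a + 1) ^ (-(2 * s)) * sobolevNormSq s 1 f := by
          rw [← Finset.mul_sum]
          have : 0 < κ := by linarith
          gcongr
          exact hf.sum_le_tsum _ fun n _ => ht n
  · calc ∑ n ∈ A with ¬|((n : ℤ) : ℝ)| ≤ 2 / a, ‖f n‖ ^ 2 * sobolevWeight s κ n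
        ≤ ∑ n ∈ A with ¬|((n : ℤ) : ℝ)| ≤ 2 / a, ‖f n‖ ^ 2 * sobolevWeight s 1 n :=
          Finset.sum_le_sum fun n _ =>
            mul_le_mul_of_nonneg_left (sobolevWeight_le_of_le hs one_pos hκ n) (sq_nonneg _)
      _ ≤ C := by
          refine sum_le_of_forall_sum_two_sub_two_cos_mul_le ht ha
            (fun n hn => ((div_lt_iff₀' ha).1 (not_le.1 (Finset.mem_filter.1 hn).2)).le)
            fun y hy => ?_
          calc _ = ∑ n ∈ A with ¬|((n : ℤ) : ℝ)| ≤ 2 / a,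
                ‖translationDiff y f n‖ ^ 2 * sobolevWeight s 1 n := by
                simp only [norm_translationDiff_sq, mul_assoc]
            _ ≤ sobolevNormSq s 1 (translationDiff y f) :=
                (summable_translationDiff hf y).sum_le_tsum _ fun n _ =>
                  mul_nonneg (sq_nonneg _) (sobolevWeight_nonneg zero_le_one n)
            _ ≤ C := hC y hy

lemma two_sub_two_cos_mul_sobolevWeight_le (hs : s ≤ 0) {K : ℝ} (hK : 0 < K) (n : ℤ) (y : ℝ) :
    (2 - 2 * Real.cos (n * y)) * sobolevWeight s 1 n
      ≤ K ^ 2 * y ^ 2 * sobolevWeight s 1 n + 4 * 2 ^ (-(2 * s)) * sobolevWeight s K n := by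
  have hw1 := sobolevWeight_nonneg (s := s) zero_le_one n
  have hwK := sobolevWeight_nonneg (s := s) hK.le n
  rcases le_total |(n : ℝ)| K with hn | hn
  · have : 2 - 2 * Real.cos (n * y) ≤ K ^ 2 * y ^ 2 :=
      calc 2 - 2 * Real.cos (n * y) ≤ (n * y) ^ 2 := two_sub_two_cos_le_sq _
        _ = |(n : ℝ)| ^ 2 * y ^ 2 := by rw [mul_pow, sq_abs]
        _ ≤ K ^ 2 * y ^ 2 := by gcongr
    have : 0 ≤ 4 * 2 ^ (-(2 * s)) * sobolevWeight s K n := by positivity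
    nlinarith
  · calc (2 - 2 * Real.cos (n * y)) * sobolevWeight s 1 n
        ≤ 4 * (2 ^ (-(2 * s)) * sobolevWeight s K n) :=
          mul_le_mul (two_sub_two_cos_le_four _) (sobolevWeight_one_le hs hK hn) hw1 zero_le_four
      _ ≤ K ^ 2 * y ^ 2 * sobolevWeight s 1 n + 4 * 2 ^ (-(2 * s)) * sobolevWeight s K n := by
          nlinarith [sq_nonneg (K * y)]

theorem sobolevNormSq_translationDiff_le (hs : s ≤ 0) {K : ℝ} (hK : 1 ≤ K)
    (hf : Summable fun n => ‖f n‖ ^ 2 * sobolevWeight s 1 n) (y : ℝ) :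
    sobolevNormSq s 1 (translationDiff y f)
      ≤ K ^ 2 * y ^ 2 * sobolevNormSq s 1 f + 4 * 2 ^ (-(2 * s)) * sobolevNormSq s K f := by
  have hfK := summable_sobolevWeight_of_le hs one_pos hK hf
  calc sobolevNormSq s 1 (translationDiff y f)
      ≤ ∑' n, (K ^ 2 * y ^ 2 * (‖f n‖ ^ 2 * sobolevWeight s 1 n)
          + 4 * 2 ^ (-(2 * s)) * (‖f n‖ ^ 2 * sobolevWeight s K n)) := by
        refine (summable_translationDiff hf y).tsum_le_tsum (fun n => ?_)
          ((hf.mul_left _).add (hfK.mul_left _))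
        have := mul_le_mul_of_nonneg_left
          (two_sub_two_cos_mul_sobolevWeight_le hs (by linarith) n y) (sq_nonneg ‖f n‖)
        rw [norm_translationDiff_sq]
        linarith
    _ = K ^ 2 * y ^ 2 * sobolevNormSq s 1 f + 4 * 2 ^ (-(2 * s)) * sobolevNormSq s K f := by
        rw [(hf.mul_left _).tsum_add (hfK.mul_left _), tsum_mul_left, tsum_mul_left]
        rfl

end Translation

section Family

variable {s B : ℝ} {F : Set (ℤ → ℂ)}

theorem uniform_sobolevNormSq_small_of_equicontinuous (hs : s < 0)
    (hbdd : ∀ f ∈ F, Summable (fun n => ‖f n‖ ^ 2 * sobolevWeight s 1 n) ∧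
      sobolevNormSq s 1 f ≤ B)
    (H : ∀ ε > (0 : ℝ), ∃ δ > (0 : ℝ), ∀ f ∈ F, ∀ y : ℝ, |y| < δ →
      √(sobolevNormSq s 1 (translationDiff y f)) ≤ ε) :
    ∀ ε > (0 : ℝ), ∃ K : ℝ, 1 ≤ K ∧ ∀ κ : ℝ, K ≤ κ → ∀ f ∈ F, √(sobolevNormSq s κ f) ≤ ε := by
  intro ε hε
  obtain ⟨δ, hδ, hH⟩ := H (ε / 2) (by positivity)
  set M := (2 / (δ / 2) + 1) ^ (-(2 * s))
  have hsmall : ∀ᶠ κ in atTop, κ ^ (2 * s) * M * B < ε ^ 2 / 2 := by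
    have : Tendsto (fun κ : ℝ => κ ^ (2 * s) * M * B) atTop (𝓝 0) := by
      simpa using ((tendsto_rpow_neg_atTop (y := -(2 * s)) (by linarith)).mul_const M).mul_const B
    exact this.eventually_lt_const (by positivity)
  obtain ⟨K, hK⟩ := eventually_atTop.1 hsmall
  refine ⟨max K 1, le_max_right _ _, fun κ hκ f hf => ?_⟩
  have hκ1 : 1 ≤ κ := (le_max_right _ _).trans hκ
  rw [sqrt_le_left hε.le]
  calc sobolevNormSq s κ f ≤ κ ^ (2 * s) * M * sobolevNormSq s 1 f + (ε / 2) ^ 2 :=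
        sobolevNormSq_le_of_translationDiff_le hs.le hκ1 (by positivity) (hbdd f hf).1
          fun y hy => (sqrt_le_left (by positivity)).1
            (hH f hf y (abs_lt.2 ⟨by linarith [hy.1], by linarith [hy.2]⟩))
    _ ≤ κ ^ (2 * s) * M * B + (ε / 2) ^ 2 := by gcongr; exact (hbdd f hf).2
    _ ≤ ε ^ 2 := by linarith [hK κ ((le_max_left _ _).trans hκ), sq_nonneg ε]

theorem equicontinuous_of_uniform_sobolevNormSq_small (hs : s ≤ 0)
    (hbdd : ∀ f ∈ F, Summable (fun n => ‖f n‖ ^ 2 * sobolevWeight s 1 n) ∧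
      sobolevNormSq s 1 f ≤ B)
    (H : ∀ ε > (0 : ℝ), ∃ K : ℝ, 1 ≤ K ∧ ∀ κ : ℝ, K ≤ κ → ∀ f ∈ F, √(sobolevNormSq s κ f) ≤ ε) :
    ∀ ε > (0 : ℝ), ∃ δ > (0 : ℝ), ∀ f ∈ F, ∀ y : ℝ, |y| < δ →
      √(sobolevNormSq s 1 (translationDiff y f)) ≤ ε := by
  intro ε hε
  set c : ℝ := 4 * 2 ^ (-(2 * s))
  have hc : 0 < c := by positivity
  obtain ⟨K, hK1, hK⟩ := H √(ε ^ 2 / 2 / c) (by positivity)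
  have hsmall : ∀ᶠ y in 𝓝 (0 : ℝ), K ^ 2 * y ^ 2 * B < ε ^ 2 / 2 := by
    have : Tendsto (fun y : ℝ => K ^ 2 * y ^ 2 * B) (𝓝 0) (𝓝 0) := by
      simpa using (by fun_prop : Continuous fun y : ℝ => K ^ 2 * y ^ 2 * B).tendsto 0
    exact this.eventually_lt_const (by positivity)
  obtain ⟨δ, hδ, hδsmall⟩ := Metric.eventually_nhds_iff.1 hsmall
  refine ⟨δ, hδ, fun f hf y hy => ?_⟩
  have hKf : c * sobolevNormSq s K f ≤ ε ^ 2 / 2 :=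
    (le_div_iff₀' hc).1 ((sqrt_le_sqrt_iff (by positivity)).1 (hK K le_rfl f hf))
  have hBf : K ^ 2 * y ^ 2 * sobolevNormSq s 1 f ≤ K ^ 2 * y ^ 2 * B := by
    gcongr; exact (hbdd f hf).2
  rw [sqrt_le_left hε.le]
  linarith [sobolevNormSq_translationDiff_le hs hK1 (hbdd f hf).1 y,
    @hδsmall y (by rwa [Real.dist_0_eq_abs])]

end Family

/-- For `s ∈ (-1/2,0)` and a bounded subset `𝓕` of `H^s(𝕋)` (represented by Fourier
coefficient sequences), `𝓕` is equicontinuous iff `sup_{f∈𝓕} ‖f‖_{H^s_κ} → 0` as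
`κ → ∞`. -/
theorem equicontinuous_iff_Hs_kappa (s : ℝ) (hs : s ∈ Set.Ioo (-(1/2) : ℝ) 0)
    (F : Set (ℤ → ℂ)) (B : ℝ)
    (hbdd : ∀ f ∈ F, Summable (fun n : ℤ => ‖f n‖ ^ 2 * (|(n : ℝ)| + 1) ^ (2 * s))
      ∧ (∑' n : ℤ, ‖f n‖ ^ 2 * (|(n : ℝ)| + 1) ^ (2 * s)) ≤ B) :
    (∀ ε > (0 : ℝ), ∃ δ > (0 : ℝ), ∀ f ∈ F, ∀ y : ℝ, |y| < δ →
        Real.sqrt (∑' n : ℤ,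
          ‖(Complex.exp (Complex.I * n * y) - 1) * f n‖ ^ 2
            * (|(n : ℝ)| + 1) ^ (2 * s)) ≤ ε)
    ↔ (∀ ε > (0 : ℝ), ∃ K : ℝ, 1 ≤ K ∧ ∀ κ : ℝ, K ≤ κ → ∀ f ∈ F,
        Real.sqrt (∑' n : ℤ,
          ‖f n‖ ^ 2 * (|(n : ℝ)| + κ) ^ (2 * s)) ≤ ε) :=
  ⟨uniform_sobolevNormSq_small_of_equicontinuous hs.2 hbdd,
    equicontinuous_of_uniform_sobolevNormSq_small hs.2.le hbdd⟩
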